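/- arXiv:2101.10106 — 2 statements merged into one kernel-verified Lean document; each statement's English description precedes it below -/
import Mathlib

section
/- Let q ≥ 2, r > 0, and u : ℝ² → ℂ measurable with finite integrals below. Then ∫ |u|^{q+1} dx ≤ (π r²)^{1/(q+2)} (∫ |u|^{q+2} dx)^{(q+1)/(q+2)} + r^{-1} (∫ |x|² |u|^q dx)^{1/2} (∫ |u|^{q+2} dx)^{1/2}. -/
/-!
On the ball `‖x‖ < r`, Hölder's inequality with exponents `(q + 2) / (q + 1)` and `q + 2`,
against the constant function `1`, bounds `∫ ‖u‖ ^ (q + 1)` by the first term. Off the ball,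
`‖u‖ ^ (q + 1) ≤ r⁻¹ ‖x‖ ‖u‖ ^ (q + 1)`, and Cauchy–Schwarz applied to the factorisation
`‖x‖ ‖u‖ ^ (q + 1) = (‖x‖ ‖u‖ ^ (q / 2)) · ‖u‖ ^ ((q + 2) / 2)` gives the second term.
-/

open MeasureTheory

section
variable {α E : Type*} [MeasurableSpace α] {μ : Measure α} [NormedAddCommGroup E] {f : α → E}
  {a b : ℝ}

lemma memLp_ofReal_of_integrable_norm_rpow (hf : AEStronglyMeasurable f μ) (hb : 0 < b)
    (hint : Integrable (fun x => ‖f x‖ ^ b) μ) : MemLp f (ENNReal.ofReal b) μ := by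
  refine (integrable_norm_rpow_iff hf (by simpa using hb) ENNReal.ofReal_ne_top).1 ?_
  rwa [ENNReal.toReal_ofReal hb.le]

lemma setIntegral_norm_rpow_le {s : Set α} (hs : μ s ≠ ⊤) (hf : AEStronglyMeasurable f μ)
    (ha : 0 < a) (hab : a < b) (hint : Integrable (fun x => ‖f x‖ ^ b) μ) :
    ∫ x in s, ‖f x‖ ^ a ∂μ ≤ μ.real s ^ (1 - a / b) * (∫ x, ‖f x‖ ^ b ∂μ) ^ (a / b) := by
  have hb : 0 < b := ha.trans hab
  have : IsFiniteMeasure (μ.restrict s) := isFiniteMeasure_restrict.2 hs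
  have hpq : (b / a).HolderConjugate (b / (b - a)) := by
    rw [Real.holderConjugate_iff, one_lt_div ha]
    refine ⟨hab, ?_⟩
    field_simp [(sub_pos.2 hab).ne']
    ring
  have hF : MemLp (fun x => ‖f x‖ ^ a) (ENNReal.ofReal (b / a)) (μ.restrict s) := by
    have := (memLp_ofReal_of_integrable_norm_rpow hf hb hint).norm_rpow_div (ENNReal.ofReal a)
    rw [ENNReal.toReal_ofReal ha.le, ← ENNReal.ofReal_div_of_pos ha] at this
    exact this.restrict s
  have H := integral_mul_le_Lp_mul_Lq_of_nonneg hpq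
    (ae_of_all _ fun x => Real.rpow_nonneg (norm_nonneg (f x)) a)
    (ae_of_all _ fun _ => zero_le_one) hF (memLp_const 1)
  have hpow : ∀ x, (‖f x‖ ^ a) ^ (b / a) = ‖f x‖ ^ b := fun x => by
    rw [← Real.rpow_mul (norm_nonneg _), mul_div_cancel₀ _ ha.ne']
  simp only [mul_one, Real.one_rpow, hpow, integral_const, measureReal_restrict_apply_univ,
    smul_eq_mul, one_div_div] at H
  calc ∫ x in s, ‖f x‖ ^ a ∂μ
      ≤ (∫ x in s, ‖f x‖ ^ b ∂μ) ^ (a / b) * μ.real s ^ ((b - a) / b) := H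
    _ ≤ (∫ x, ‖f x‖ ^ b ∂μ) ^ (a / b) * μ.real s ^ ((b - a) / b) := by
      have hnn : ∀ x, 0 ≤ ‖f x‖ ^ b := fun x => by positivity
      gcongr ?_ * _
      exact Real.rpow_le_rpow (integral_nonneg hnn)
        (setIntegral_le_integral hint (ae_of_all _ hnn)) (by positivity)
    _ = _ := by rw [mul_comm, sub_div, div_self hb.ne']

variable {w : α → ℝ}

lemma rpow_div_two_sq {y : ℝ} (hy : 0 ≤ y) (a : ℝ) : (y ^ (a / 2)) ^ 2 = y ^ a := by
  rw [← Real.rpow_natCast, ← Real.rpow_mul hy]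
  norm_num

lemma memLp_two_mul_norm_rpow_div_two (hwm : AEStronglyMeasurable w μ)
    (hf : AEStronglyMeasurable f μ) (hint : Integrable (fun x => w x ^ 2 * ‖f x‖ ^ a) μ) :
    MemLp (fun x => w x * ‖f x‖ ^ (a / 2)) (ENNReal.ofReal 2) μ := by
  have hm : AEStronglyMeasurable (fun x => w x * ‖f x‖ ^ (a / 2)) μ :=
    hwm.mul (hf.norm.aemeasurable.pow_const _).aestronglyMeasurable
  rw [ENNReal.ofReal_ofNat, memLp_two_iff_integrable_sq hm]
  refine hint.congr (ae_of_all _ fun x => ?_)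
  simp only [mul_pow, rpow_div_two_sq (norm_nonneg _)]

lemma integrable_mul_norm_rpow_and_integral_le (hw : 0 ≤ w) (hwm : AEStronglyMeasurable w μ)
    (hf : AEStronglyMeasurable f μ) (ha : 0 ≤ a) (hb : 0 ≤ b)
    (hwf : Integrable (fun x => w x ^ 2 * ‖f x‖ ^ a) μ)
    (hint : Integrable (fun x => ‖f x‖ ^ b) μ) :
    Integrable (fun x => w x * ‖f x‖ ^ ((a + b) / 2)) μ ∧
      ∫ x, w x * ‖f x‖ ^ ((a + b) / 2) ∂μ ≤
        (∫ x, w x ^ 2 * ‖f x‖ ^ a ∂μ) ^ (1 / 2 : ℝ) * (∫ x, ‖f x‖ ^ b ∂μ) ^ (1 / 2 : ℝ) := by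
  have hF := memLp_two_mul_norm_rpow_div_two hwm hf hwf
  have hG : MemLp (fun x => ‖f x‖ ^ (b / 2)) (ENNReal.ofReal 2) μ := by
    simpa using memLp_two_mul_norm_rpow_div_two (w := 1)
      aestronglyMeasurable_const hf (by simpa using hint)
  have hsplit : ∀ x, w x * ‖f x‖ ^ ((a + b) / 2) = w x * ‖f x‖ ^ (a / 2) * ‖f x‖ ^ (b / 2) :=
    fun x => by rw [add_div, Real.rpow_add_of_nonneg (norm_nonneg _) (by positivity)
      (by positivity), mul_assoc]
  simp only [hsplit]
  refine ⟨?_, ?_⟩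
  · rw [ENNReal.ofReal_ofNat] at hF hG
    exact hF.integrable_mul hG
  have H := integral_mul_le_Lp_mul_Lq_of_nonneg Real.HolderConjugate.two_two
    (ae_of_all _ fun x => mul_nonneg (hw x) (Real.rpow_nonneg (norm_nonneg (f x)) _))
    (ae_of_all _ fun x => Real.rpow_nonneg (norm_nonneg (f x)) _) hF hG
  simpa only [Real.rpow_two, mul_pow, rpow_div_two_sq (norm_nonneg _), one_div] using H
end

lemma setIntegral_compl_ball_le {E : Type*} [NormedAddCommGroup E] [MeasurableSpace E]
    [OpensMeasurableSpace E] {μ : Measure E} {f : E → ℝ} (hf0 : 0 ≤ f) (hf : Integrable f μ)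
    (hxf : Integrable (fun x => ‖x‖ * f x) μ) {r : ℝ} (hr : 0 < r) :
    ∫ x in (Metric.ball 0 r)ᶜ, f x ∂μ ≤ r⁻¹ * ∫ x, ‖x‖ * f x ∂μ := by
  calc ∫ x in (Metric.ball 0 r)ᶜ, f x ∂μ
      ≤ ∫ x in (Metric.ball 0 r)ᶜ, r⁻¹ * (‖x‖ * f x) ∂μ := by
        refine setIntegral_mono_on hf.integrableOn (hxf.const_mul _).integrableOn
          Metric.isOpen_ball.measurableSet.compl fun x hx => ?_
        have hrx : r ≤ ‖x‖ := by simpa using hx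
        rw [← mul_assoc]
        exact le_mul_of_one_le_left (hf0 x) ((one_le_inv_mul₀ hr).2 hrx)
    _ ≤ r⁻¹ * ∫ x, ‖x‖ * f x ∂μ := by
        rw [integral_const_mul]
        exact mul_le_mul_of_nonneg_left (setIntegral_le_integral hxf
          (ae_of_all _ fun x => mul_nonneg (norm_nonneg x) (hf0 x))) (inv_nonneg.2 hr.le)

lemma EuclideanSpace.measureReal_ball_fin_two (x : EuclideanSpace ℝ (Fin 2)) {r : ℝ}
    (hr : 0 ≤ r) : volume.real (Metric.ball x r) = Real.pi * r ^ 2 := by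
  rw [measureReal_def, EuclideanSpace.volume_ball_fin_two, ← ENNReal.ofReal_pow hr,
    ← ENNReal.ofReal_mul (by positivity), ENNReal.toReal_ofReal (by positivity), mul_comm]

theorem stmt_1 (q r : ℝ) (hq : 2 ≤ q) (hr : 0 < r)
    (u : EuclideanSpace ℝ (Fin 2) → ℂ) (hmeas : Measurable u)
    (h1 : Integrable (fun x : EuclideanSpace ℝ (Fin 2) => ‖u x‖ ^ (q + 1)))
    (h2 : Integrable (fun x : EuclideanSpace ℝ (Fin 2) => ‖u x‖ ^ (q + 2)))
    (h3 : Integrable (fun x : EuclideanSpace ℝ (Fin 2) => ‖x‖ ^ 2 * ‖u x‖ ^ q)) :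
    (∫ x : EuclideanSpace ℝ (Fin 2), ‖u x‖ ^ (q + 1)) ≤
      (Real.pi * r ^ 2) ^ (1 / (q + 2)) *
          (∫ x : EuclideanSpace ℝ (Fin 2), ‖u x‖ ^ (q + 2)) ^ ((q + 1) / (q + 2)) +
        r⁻¹ * (∫ x : EuclideanSpace ℝ (Fin 2), ‖x‖ ^ 2 * ‖u x‖ ^ q) ^ ((1 : ℝ) / 2) *
          (∫ x : EuclideanSpace ℝ (Fin 2), ‖u x‖ ^ (q + 2)) ^ ((1 : ℝ) / 2) := by
  have hu : AEStronglyMeasurable u := hmeas.aestronglyMeasurable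
  have hinner := setIntegral_norm_rpow_le (s := Metric.ball 0 r) measure_ball_lt_top.ne hu
    (by linarith : 0 < q + 1) (by linarith : q + 1 < q + 2) h2
  rw [EuclideanSpace.measureReal_ball_fin_two 0 hr.le, show 1 - (q + 1) / (q + 2) = 1 / (q + 2) by field_simp; ring] at hinner
  obtain ⟨hweighted, hcs⟩ := integrable_mul_norm_rpow_and_integral_le (fun x => norm_nonneg x)
    continuous_norm.aestronglyMeasurable hu (by linarith : 0 ≤ q) (by linarith : 0 ≤ q + 2) h3 h2
  rw [show (q + (q + 2)) / 2 = q + 1 by ring] at hweighted hcs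
  have houter := setIntegral_compl_ball_le (fun x => by positivity) h1 hweighted hr
  rw [← integral_add_compl Metric.isOpen_ball.measurableSet h1, mul_assoc]
  exact add_le_add hinner (houter.trans (mul_le_mul_of_nonneg_left hcs (by positivity)))
end

section
/- Define δ(t) = 1/(2 sinh(2t(γ₁+iγ₂))) and β(t) = cosh(2t(γ₁+iγ₂))/(2 sinh(2t(γ₁+iγ₂))) for γ₁ > 0, γ₂ ∈ ℝ, t > 0. Then Re(β(t) − δ(t)) > 0 for all t > 0, and Re δ(t) > 0 for all t with 0 < t < π/(4|γ₂|) when γ₂ ≠ 0 (and for all t > 0 when γ₂ = 0). -/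
open Complex in
lemma aux_sinh (a b : ℝ) : Complex.sinh ((a:ℂ) + (b:ℂ)*I) =
    (Real.sinh a * Real.cos b : ℝ) + (Real.cosh a * Real.sin b : ℝ) * I := by
  rw [Complex.sinh_add, Complex.sinh_mul_I, Complex.cosh_mul_I]
  push_cast [Complex.ofReal_sinh, Complex.ofReal_cosh]
  ring

open Complex in
lemma aux_cosh (a b : ℝ) : Complex.cosh ((a:ℂ) + (b:ℂ)*I) =
    (Real.cosh a * Real.cos b : ℝ) + (Real.sinh a * Real.sin b : ℝ) * I := by
  rw [Complex.cosh_add, Complex.sinh_mul_I, Complex.cosh_mul_I]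
  push_cast [Complex.ofReal_sinh, Complex.ofReal_cosh]
  ring

lemma key1 (a b : ℝ) (ha : 0 < a) :
    0 < (Complex.cosh ((a:ℂ) + (b:ℂ)*Complex.I) / (2 * Complex.sinh ((a:ℂ) + (b:ℂ)*Complex.I))
        - 1 / (2 * Complex.sinh ((a:ℂ) + (b:ℂ)*Complex.I))).re := by
  have h1 : 0 < Real.sinh a := Real.sinh_pos_iff.2 ha
  have h2 : 1 < Real.cosh a := Real.one_lt_cosh.2 ha.ne'
  have hcb : Real.cos b ≤ 1 := Real.cos_le_one b
  have h3 := Real.sin_sq_add_cos_sq b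
  have h4 := Real.cosh_sq a
  rw [aux_sinh, aux_cosh, Complex.sub_re, Complex.div_re, Complex.div_re]
  simp only [Complex.normSq_apply, Complex.add_re, Complex.add_im, Complex.mul_re, Complex.mul_im,
    Complex.ofReal_re, Complex.ofReal_im, Complex.I_re, Complex.I_im, Complex.one_re,
    Complex.one_im]
  norm_num
  ring_nf
  have hD : 0 < Real.sinh a ^ 2 * Real.cos b ^ 2 * 4 + Real.cosh a ^ 2 * Real.sin b ^ 2 * 4 := by
    nlinarith [sq_nonneg (Real.sin b)]
  have hDi : 0 < (Real.sinh a ^ 2 * Real.cos b ^ 2 * 4 + Real.cosh a ^ 2 * Real.sin b ^ 2 * 4)⁻¹ :=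
    inv_pos.2 hD
  have hkey : 0 < Real.sinh a * (Real.cosh a - Real.cos b) :=
    mul_pos h1 (sub_pos.2 (lt_of_le_of_lt hcb h2))
  have hPQ : Real.sinh a * Real.cos b * 2 <
      (Real.sinh a * Real.cos b ^ 2 * Real.cosh a + Real.sinh a * Real.cosh a * Real.sin b ^ 2) * 2 := by
    have h5 : Real.sinh a * Real.cos b ^ 2 * Real.cosh a + Real.sinh a * Real.cosh a * Real.sin b ^ 2
        = Real.sinh a * Real.cosh a := by
      linear_combination (Real.sinh a * Real.cosh a) * h3
    nlinarith [hkey, h5]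
  nlinarith [mul_lt_mul_of_pos_right hPQ hDi]

lemma key2 (a b : ℝ) (ha : 0 < a) (hb : 0 < Real.cos b) :
    0 < (1 / (2 * Complex.sinh ((a:ℂ) + (b:ℂ)*Complex.I))).re := by
  have h1 : 0 < Real.sinh a := Real.sinh_pos_iff.2 ha
  have h2 : 1 < Real.cosh a := Real.one_lt_cosh.2 ha.ne'
  have h3 := Real.sin_sq_add_cos_sq b
  have h4 := Real.cosh_sq a
  rw [aux_sinh, Complex.div_re]
  simp only [Complex.normSq_apply, Complex.add_re, Complex.add_im, Complex.mul_re, Complex.mul_im,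
    Complex.ofReal_re, Complex.ofReal_im, Complex.I_re, Complex.I_im, Complex.one_re,
    Complex.one_im]
  norm_num
  ring_nf
  have hD : 0 < Real.sinh a ^ 2 * Real.cos b ^ 2 * 4 + Real.cosh a ^ 2 * Real.sin b ^ 2 * 4 := by
    nlinarith [sq_nonneg (Real.sin b)]
  positivity

theorem stmt_9 (γ₁ γ₂ : ℝ) (hγ₁ : 0 < γ₁) (δ β : ℝ → ℂ)
    (hδ : ∀ t : ℝ, δ t = 1 / (2 * Complex.sinh (2 * (t : ℂ) * ((γ₁ : ℂ) + (γ₂ : ℂ) * Complex.I))))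
    (hβ : ∀ t : ℝ, β t = Complex.cosh (2 * (t : ℂ) * ((γ₁ : ℂ) + (γ₂ : ℂ) * Complex.I)) /
        (2 * Complex.sinh (2 * (t : ℂ) * ((γ₁ : ℂ) + (γ₂ : ℂ) * Complex.I)))) :
    (∀ t : ℝ, 0 < t → 0 < (β t - δ t).re) ∧
      (γ₂ ≠ 0 → ∀ t : ℝ, 0 < t → t < Real.pi / (4 * |γ₂|) → 0 < (δ t).re) ∧
      (γ₂ = 0 → ∀ t : ℝ, 0 < t → 0 < (δ t).re) := by
  have hz : ∀ t : ℝ, 2 * (t : ℂ) * ((γ₁ : ℂ) + (γ₂ : ℂ) * Complex.I)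
      = ((2*t*γ₁ : ℝ) : ℂ) + ((2*t*γ₂ : ℝ) : ℂ) * Complex.I := by
    intro t; push_cast; ring
  refine ⟨?_, ?_, ?_⟩
  · intro t ht
    rw [hβ, hδ, hz]
    exact key1 _ _ (by positivity)
  · intro hγ₂ t ht ht'
    rw [hδ, hz]
    refine key2 _ _ (by positivity) ?_
    have hγ : 0 < |γ₂| := abs_pos.2 hγ₂
    have hlt : 2 * t * |γ₂| < Real.pi / 2 := by
      rw [lt_div_iff₀ (by positivity)] at ht'
      nlinarith
    have habs : |2 * t * γ₂| < Real.pi / 2 := by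
      rwa [abs_mul, abs_of_pos (by positivity : (0:ℝ) < 2 * t)]
    exact Real.cos_pos_of_mem_Ioo ⟨neg_lt_of_abs_lt habs, lt_of_abs_lt habs⟩
  · intro hγ₂ t ht
    rw [hδ, hz, hγ₂]
    refine key2 _ _ (by positivity) ?_
    simp [Real.cos_zero]
end
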